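/- arXiv:0708.1155 — 2 statements merged into one kernel-verified Lean document; each statement's English description precedes it below -/
import Mathlib

section
/- Let μ < 1/4 and let h be a positive local super-harmonic of L_μ. Then liminf_{δ(x)→0} h(x)/δ(x)^{β₊} > 0 and liminf_{δ(x)→0} h(x)/δ(x)^{β₋} < ∞. -/
open Set Metric MeasureTheory Real

noncomputable section

/-- Distance to the boundary of `Ω`. -/
def bdist {N : ℕ} (Ω : Set (EuclideanSpace ℝ (Fin N))) (x : EuclideanSpace ℝ (Fin N)) : ℝ :=
  Metric.infDist x Ωᶜ

/-- The collar `Ω_ρ = {x ∈ Ω : δ(x) < ρ}`. -/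
def collar {N : ℕ} (Ω : Set (EuclideanSpace ℝ (Fin N))) (ρ : ℝ) :
    Set (EuclideanSpace ℝ (Fin N)) :=
  {x ∈ Ω | bdist Ω x < ρ}

/-- The ring `Ω_{ε,ρ} = {x ∈ Ω : ε < δ(x) < ρ}`. -/
def ring' {N : ℕ} (Ω : Set (EuclideanSpace ℝ (Fin N))) (ε ρ : ℝ) :
    Set (EuclideanSpace ℝ (Fin N)) :=
  {x ∈ Ω | ε < bdist Ω x ∧ bdist Ω x < ρ}

/-- The Laplacian. -/
def lap {N : ℕ} (f : EuclideanSpace ℝ (Fin N) → ℝ) (x : EuclideanSpace ℝ (Fin N)) : ℝ :=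
  ∑ i : Fin N, fderiv ℝ (fun y => fderiv ℝ f y (EuclideanSpace.single i 1)) x
    (EuclideanSpace.single i 1)

/-- `ρ₀` is a good collar width: `δ` is `C²` on `Ω_{ρ₀}`, `|∇δ| = 1` there, `Δδ` bounded. -/
def GoodCollar {N : ℕ} (Ω : Set (EuclideanSpace ℝ (Fin N))) (ρ₀ : ℝ) : Prop :=
  0 < ρ₀ ∧ ContDiffOn ℝ 2 (bdist Ω) (collar Ω ρ₀) ∧
    (∀ x ∈ collar Ω ρ₀, ‖gradient (bdist Ω) x‖ = 1) ∧
    ∃ M, ∀ x ∈ collar Ω ρ₀, |lap (bdist Ω) x| ≤ M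

/-- A super-harmonic of `L_μ = -Δ - μ/δ²` on `G`. -/
def SuperHarm {N : ℕ} (Ω : Set (EuclideanSpace ℝ (Fin N))) (μ : ℝ)
    (G : Set (EuclideanSpace ℝ (Fin N))) (h : EuclideanSpace ℝ (Fin N) → ℝ) : Prop :=
  ContDiffOn ℝ 2 h G ∧ ∀ x ∈ G, 0 ≤ -(lap h x) - μ / (bdist Ω x) ^ 2 * h x

/-- A sub-harmonic of `L_μ = -Δ - μ/δ²` on `G`. -/
def SubHarm {N : ℕ} (Ω : Set (EuclideanSpace ℝ (Fin N))) (μ : ℝ)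
    (G : Set (EuclideanSpace ℝ (Fin N))) (h : EuclideanSpace ℝ (Fin N) → ℝ) : Prop :=
  ContDiffOn ℝ 2 h G ∧ ∀ x ∈ G, -(lap h x) - μ / (bdist Ω x) ^ 2 * h x ≤ 0

/-- A positive local super-harmonic of `L_μ`, defined on the collar `Ω_σ`. -/
def PosSuperHarmOn {N : ℕ} (Ω : Set (EuclideanSpace ℝ (Fin N))) (μ σ : ℝ)
    (h : EuclideanSpace ℝ (Fin N) → ℝ) : Prop :=
  SuperHarm Ω μ (collar Ω σ) h ∧ ∀ x ∈ collar Ω σ, 0 < h x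

/-- A sub-solution of `(*)`: `-Δu - (μ/δ²)u + u^p/δ^s = 0` on `G`. -/
def SubSol {N : ℕ} (Ω : Set (EuclideanSpace ℝ (Fin N))) (μ s p : ℝ)
    (G : Set (EuclideanSpace ℝ (Fin N))) (u : EuclideanSpace ℝ (Fin N) → ℝ) : Prop :=
  ContDiffOn ℝ 2 u G ∧ (∀ x ∈ G, 0 ≤ u x) ∧
    ∀ x ∈ G, -(lap u x) - μ / (bdist Ω x) ^ 2 * u x + (u x) ^ p / (bdist Ω x) ^ s ≤ 0

/-- A super-solution of `(*)` on `G`. -/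
def SuperSol {N : ℕ} (Ω : Set (EuclideanSpace ℝ (Fin N))) (μ s p : ℝ)
    (G : Set (EuclideanSpace ℝ (Fin N))) (u : EuclideanSpace ℝ (Fin N) → ℝ) : Prop :=
  ContDiffOn ℝ 2 u G ∧ (∀ x ∈ G, 0 < u x) ∧
    ∀ x ∈ G, 0 ≤ -(lap u x) - μ / (bdist Ω x) ^ 2 * u x + (u x) ^ p / (bdist Ω x) ^ s

/-- A regularized distance `(d, c)` on `Ω`. -/
def RegDist {N : ℕ} (Ω : Set (EuclideanSpace ℝ (Fin N))) (d : EuclideanSpace ℝ (Fin N) → ℝ)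
    (c : ℝ) : Prop :=
  1 ≤ c ∧ ContDiffOn ℝ 2 d Ω ∧ (∀ x ∈ Ω, 0 < d x) ∧
    (∀ x ∈ Ω, c⁻¹ * bdist Ω x ≤ d x ∧ d x ≤ c * bdist Ω x) ∧
    (∀ x ∈ Ω, ‖gradient d x‖ ≤ c) ∧ (∀ x ∈ Ω, |lap d x| ≤ c / d x)

/-! With `δ` the distance to the boundary and `|∇δ| = 1`, one has
`L_μ δ^γ = (1/4 - μ - (γ - 1/2)²) δ^(γ-2) - γ δ^(γ-1) Δδ`, so `δ^β₊` and `δ^β₋` are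
`L_μ`-harmonic up to a lower-order error, and the perturbations
`δ^β ± δ^(β+α) - K δ^(1/2)` are strict subsolutions in a thin collar. A maximum principle for
`φ / h` on the rings `{ε ≤ δ ≤ τ}` compares `h` with these barriers. The `β₊`-barrier vanishing on
`δ = ε` gives `h ≥ c δ^β₊` after letting `ε → 0`. If instead `h ≥ C δ^β₋` held near `∂Ω` for a
large `C`, the `β₋`-barrier would force `h x ≥ 2 h x` at a fixed point `x`. -/

open Filter Topology InnerProductSpace Laplacian

theorem deriv_deriv_nonpos_of_isLocalMax {f : ℝ → ℝ} {a : ℝ} (hmax : IsLocalMax f a)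
    (hc : ContinuousAt f a) : deriv (deriv f) a ≤ 0 := by
  by_contra! hpos
  -- a strict second-order minimum that is also a maximum makes `f` locally constant
  have hmin := isLocalMin_of_deriv_deriv_pos hpos hmax.deriv_eq_zero hc
  have hconst : f =ᶠ[𝓝 a] fun _ => f a := by
    filter_upwards [hmax, hmin] with x h₁ h₂ using le_antisymm h₁ h₂
  have hderiv : deriv f =ᶠ[𝓝 a] fun _ => 0 := by
    filter_upwards [hconst.eventuallyEq_nhds] with x hx
    rw [hx.deriv_eq, deriv_const]
  rw [hderiv.deriv_eq, deriv_const] at hpos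
  exact lt_irrefl _ hpos

section

variable {N : ℕ} {f : EuclideanSpace ℝ (Fin N) → ℝ} {x : EuclideanSpace ℝ (Fin N)}

theorem hasFDerivAt_fderiv_apply (hf : ContDiffAt ℝ 2 f x) (v : EuclideanSpace ℝ (Fin N)) :
    HasFDerivAt (fun y => fderiv ℝ f y v) ((fderiv ℝ (fderiv ℝ f) x).flip v) x :=
  ((hf.fderiv_right (m := 1) le_rfl).differentiableAt one_ne_zero).hasFDerivAt.clm_apply
    (hasFDerivAt_const v x) |>.congr_fderiv (by ext; simp)

theorem lap_eq_laplacian (hf : ContDiffAt ℝ 2 f x) : lap f x = Δ f x := by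
  rw [laplacian_eq_iteratedFDeriv_orthonormalBasis f (EuclideanSpace.basisFun (Fin N) ℝ)]
  refine Finset.sum_congr rfl fun i _ => ?_
  rw [(hasFDerivAt_fderiv_apply hf _).fderiv, iteratedFDeriv_two_apply]
  simp

theorem sum_fderiv_single_sq (f : EuclideanSpace ℝ (Fin N) → ℝ) (x : EuclideanSpace ℝ (Fin N)) :
    ∑ i, fderiv ℝ f x (EuclideanSpace.single i 1) ^ 2 = ‖gradient f x‖ ^ 2 := by
  rw [EuclideanSpace.norm_sq_eq]
  refine Finset.sum_congr rfl fun i _ => ?_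
  rw [gradient, ← toDual_symm_apply, EuclideanSpace.inner_single_right]
  simp

theorem lap_nonpos_of_isLocalMax (hf : ContDiffAt ℝ 2 f x) (hmax : IsLocalMax f x) :
    lap f x ≤ 0 := by
  refine Finset.sum_nonpos fun i _ => ?_
  set v : EuclideanSpace ℝ (Fin N) := EuclideanSpace.single i 1
  set line : ℝ → EuclideanSpace ℝ (Fin N) := fun t => x + t • v
  have hline : ∀ t, HasDerivAt line v t := fun t => by
    have := ((hasDerivAt_id t).smul_const v).const_add x
    rwa [one_smul] at this
  have hline0 : x = line 0 := by simp [line]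
  have htend : Tendsto line (𝓝 0) (𝓝 x) := hline0 ▸ (hline 0).continuousAt.tendsto
  have hderiv : deriv (f ∘ line) =ᶠ[𝓝 0] fun t => fderiv ℝ f (line t) v := by
    filter_upwards [htend.eventually (hf.eventually (by simp))] with t ht
    exact ((ht.differentiableAt (by simp)).hasFDerivAt.comp_hasDerivAt t (hline t)).deriv
  have hsecond : deriv (deriv (f ∘ line)) 0 = fderiv ℝ (fun y => fderiv ℝ f y v) x v := by
    rw [hderiv.deriv_eq, (hasFDerivAt_fderiv_apply hf v).fderiv]
    exact ((hasFDerivAt_fderiv_apply hf v).comp_hasDerivAt_of_eq 0 (hline 0) hline0).deriv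
  rw [← hsecond]
  exact deriv_deriv_nonpos_of_isLocalMax ((hline0 ▸ hmax).comp_continuous (hline 0).continuousAt)
    (hf.continuousAt.comp_of_eq (hline 0).continuousAt hline0.symm)

theorem lap_comp {g g' : ℝ → ℝ} {g'' : ℝ} (hf : ContDiffAt ℝ 2 f x)
    (hg : ∀ᶠ t in 𝓝 (f x), HasDerivAt g (g' t) t) (hg' : HasDerivAt g' g'' (f x)) :
    lap (g ∘ f) x = g'' * ‖gradient f x‖ ^ 2 + g' (f x) * lap f x := by
  have hf₁ : ∀ᶠ y in 𝓝 x, DifferentiableAt ℝ f y := by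
    filter_upwards [hf.eventually (by simp)] with y hy using hy.differentiableAt (by simp)
  have hg'f : HasFDerivAt (fun y => g' (f y)) (g'' • fderiv ℝ f x) x :=
    hg'.comp_hasFDerivAt x (hf.differentiableAt (by simp)).hasFDerivAt
  simp only [lap, ← sum_fderiv_single_sq, Finset.mul_sum, ← Finset.sum_add_distrib]
  refine Finset.sum_congr rfl fun i _ => ?_
  set v : EuclideanSpace ℝ (Fin N) := EuclideanSpace.single i 1
  have hfirst : (fun y => fderiv ℝ (g ∘ f) y v) =ᶠ[𝓝 x] fun y => g' (f y) * fderiv ℝ f y v := by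
    filter_upwards [hf₁, hf.continuousAt.eventually hg] with y hy hgy
    rw [(hgy.comp_hasFDerivAt y hy.hasFDerivAt).fderiv]
    rfl
  rw [hfirst.fderiv_eq, (hg'f.fun_mul (hasFDerivAt_fderiv_apply hf v)).fderiv,
    (hasFDerivAt_fderiv_apply hf v).fderiv]
  simp only [add_apply, smul_apply, smul_eq_mul]
  ring

theorem lap_rpow (hf : ContDiffAt ℝ 2 f x) (hx : 0 < f x) (γ : ℝ) :
    lap (fun y => f y ^ γ) x =
      γ * (γ - 1) * f x ^ (γ - 2) * ‖gradient f x‖ ^ 2 + γ * f x ^ (γ - 1) * lap f x := by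
  have hg : ∀ᶠ t in 𝓝 (f x), HasDerivAt (fun t => t ^ γ) (γ * t ^ (γ - 1)) t := by
    filter_upwards [eventually_ne_nhds hx.ne'] with t ht
    exact hasDerivAt_rpow_const (Or.inl ht)
  have hg' := (hasDerivAt_rpow_const (p := γ - 1) (Or.inl hx.ne')).const_mul γ
  rw [show (fun y => f y ^ γ) = (fun t => t ^ γ) ∘ f from rfl, lap_comp hf hg hg',
    show γ - 1 - 1 = γ - 2 by ring]
  ring

def schrodingerOp (V f : EuclideanSpace ℝ (Fin N) → ℝ) (x : EuclideanSpace ℝ (Fin N)) : ℝ :=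
  -(lap f x) - V x * f x

section schrodingerOp

variable {V g : EuclideanSpace ℝ (Fin N) → ℝ}

theorem schrodingerOp_add (hf : ContDiffAt ℝ 2 f x) (hg : ContDiffAt ℝ 2 g x) :
    schrodingerOp V (fun y => f y + g y) x = schrodingerOp V f x + schrodingerOp V g x := by
  simp only [schrodingerOp]
  rw [lap_eq_laplacian (hf.add hg), lap_eq_laplacian hf, lap_eq_laplacian hg,
    show (fun y => f y + g y) = f + g from rfl, hf.laplacian_add hg]
  ring

theorem schrodingerOp_sub (hf : ContDiffAt ℝ 2 f x) (hg : ContDiffAt ℝ 2 g x) :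
    schrodingerOp V (fun y => f y - g y) x = schrodingerOp V f x - schrodingerOp V g x := by
  simp only [schrodingerOp]
  rw [lap_eq_laplacian (hf.sub hg), lap_eq_laplacian hf, lap_eq_laplacian hg,
    show (fun y => f y - g y) = f - g from rfl, hf.laplacian_sub hg]
  ring

theorem schrodingerOp_const_mul (c : ℝ) (hf : ContDiffAt ℝ 2 f x) :
    schrodingerOp V (fun y => c * f y) x = c * schrodingerOp V f x := by
  simp only [schrodingerOp]
  rw [lap_eq_laplacian (contDiffAt_const.mul hf), lap_eq_laplacian hf,
    show (fun y => c * f y) = c • f from rfl, laplacian_smul c hf, smul_eq_mul]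
  ring

theorem le_of_schrodingerOp_neg {φ h : EuclideanSpace ℝ (Fin N) → ℝ}
    {K U : Set (EuclideanSpace ℝ (Fin N))} (hK : IsCompact K) (hU : IsOpen U) (hUK : U ⊆ K)
    (hφ : ∀ x ∈ K, ContDiffAt ℝ 2 φ x) (hh : ∀ x ∈ K, ContDiffAt ℝ 2 h x)
    (hpos : ∀ x ∈ K, 0 < h x) (hsub : ∀ x ∈ U, schrodingerOp V φ x < 0)
    (hsuper : ∀ x ∈ U, 0 ≤ schrodingerOp V h x) (hbdry : ∀ x ∈ K \ U, φ x ≤ h x) :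
    ∀ x ∈ K, φ x ≤ h x := by
  intro x hx
  have hcont : ContinuousOn (fun y => φ y / h y) K := fun y hy =>
    ((hφ y hy).continuousAt.div (hh y hy).continuousAt (hpos y hy).ne').continuousWithinAt
  obtain ⟨x₀, hx₀K, hmax⟩ := hK.exists_isMaxOn ⟨x, hx⟩ hcont
  set θ := φ x₀ / h x₀
  suffices hθ : θ ≤ 1 by
    simpa [div_le_one (hpos x hx)] using (hmax hx).trans hθ
  by_contra! hθ
  have hx₀U : x₀ ∈ U := by
    by_contra hx₀U
    exact hθ.not_ge ((div_le_one (hpos x₀ hx₀K)).mpr (hbdry x₀ ⟨hx₀K, hx₀U⟩))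
  have hφx₀ : φ x₀ = θ * h x₀ := (div_mul_cancel₀ _ (hpos x₀ hx₀K).ne').symm
  -- `φ - θ h` attains its maximum `0` at the interior point `x₀`
  have hlocmax : IsLocalMax (fun y => φ y - θ * h y) x₀ := by
    filter_upwards [hU.mem_nhds hx₀U] with y hy
    have : φ y ≤ θ * h y := (div_le_iff₀ (hpos y (hUK hy))).mp (hmax (hUK hy))
    rw [hφx₀]
    linarith
  have hθh : ContDiffAt ℝ 2 (fun y => θ * h y) x₀ := contDiffAt_const.mul (hh x₀ hx₀K)
  have hlin : schrodingerOp V (fun y => φ y - θ * h y) x₀ =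
      schrodingerOp V φ x₀ - θ * schrodingerOp V h x₀ := by
    rw [schrodingerOp_sub (hφ x₀ hx₀K) hθh, schrodingerOp_const_mul θ (hh x₀ hx₀K)]
  have hnonneg : 0 ≤ schrodingerOp V (fun y => φ y - θ * h y) x₀ := by
    have := lap_nonpos_of_isLocalMax ((hφ x₀ hx₀K).sub hθh) hlocmax
    simp only [schrodingerOp, hφx₀, sub_self, mul_zero]
    linarith
  have := mul_nonneg (zero_le_one.trans hθ.le) (hsuper x₀ hx₀U)
  linarith [hsub x₀ hx₀U]

end schrodingerOp

-- The second component of `SuperHarm Ω μ G h` is, by definition,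
-- `∀ x ∈ G, 0 ≤ schrodingerOp (hardyPotential Ω μ) h x`.
def hardyPotential (Ω : Set (EuclideanSpace ℝ (Fin N))) (μ : ℝ)
    (x : EuclideanSpace ℝ (Fin N)) : ℝ :=
  μ / bdist Ω x ^ 2

/- For `(γ - 1/2)² = 1/4 - μ` the term `δ^γ` is `L_μ`-harmonic up to `O(δ^(γ-1))`; the sign `σ`
is chosen so that `σ δ^(γ+α)` contributes a dominant negative `δ^(γ+α-2)`, and `δ^(1/2)` is a
supersolution, so `K` only adjusts boundary values. -/
def barrier (Ω : Set (EuclideanSpace ℝ (Fin N))) (γ σ α K : ℝ)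
    (y : EuclideanSpace ℝ (Fin N)) : ℝ :=
  bdist Ω y ^ γ + σ * bdist Ω y ^ (γ + α) - K * bdist Ω y ^ (1 / 2 : ℝ)

variable {Ω : Set (EuclideanSpace ℝ (Fin N))} {μ r : ℝ} {h : EuclideanSpace ℝ (Fin N) → ℝ}
  {y : EuclideanSpace ℝ (Fin N)}

theorem continuous_bdist : Continuous (bdist Ω) := continuous_infDist_pt _

theorem bdist_pos (hΩo : IsOpen Ω) (hΩc : Ωᶜ.Nonempty) (hx : x ∈ Ω) : 0 < bdist Ω x :=
  (hΩo.isClosed_compl.notMem_iff_infDist_pos hΩc).mp (by simpa using hx)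

theorem mem_of_bdist_pos (hx : 0 < bdist Ω x) : x ∈ Ω := by
  by_contra hc
  exact hx.ne' (infDist_zero_of_mem hc)

theorem isOpen_collar (hΩo : IsOpen Ω) (r : ℝ) : IsOpen (collar Ω r) :=
  hΩo.inter (isOpen_Iio.preimage continuous_bdist)

theorem collar_mono {r r' : ℝ} (h : r ≤ r') : collar Ω r ⊆ collar Ω r' :=
  fun _ hx => ⟨hx.1, hx.2.trans_le h⟩

theorem isCompact_bdist_preimage_Icc (hΩb : Bornology.IsBounded Ω) {ε τ : ℝ} (hε : 0 < ε) :
    IsCompact (bdist Ω ⁻¹' Icc ε τ) :=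
  isCompact_of_isClosed_isBounded (isClosed_Icc.preimage continuous_bdist)
    (hΩb.subset fun _ hx => mem_of_bdist_pos (hε.trans_le hx.1))

theorem exists_bdist_eq (hΩc : Ωᶜ.Nonempty) {t : ℝ} (ht : 0 ≤ t) (htx : t ≤ bdist Ω x) :
    ∃ y, bdist Ω y = t := by
  obtain ⟨z, hz⟩ := hΩc
  exact intermediate_value_univ z x continuous_bdist ⟨by rwa [bdist, infDist_zero_of_mem hz], htx⟩

theorem compl_nonempty_of_isBounded (hN : 0 < N) (hΩb : Bornology.IsBounded Ω) :
    Ωᶜ.Nonempty := by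
  have : NeZero N := ⟨hN.ne'⟩
  rw [nonempty_compl]
  rintro rfl
  exact NormedSpace.unbounded_univ ℝ _ hΩb

theorem GoodCollar.mono {ρ : ℝ} (hρ : GoodCollar Ω ρ) (hr : 0 < r) (hrρ : r ≤ ρ) :
    GoodCollar Ω r := by
  obtain ⟨-, hC2, hgrad, M, hM⟩ := hρ
  exact ⟨hr, hC2.mono (collar_mono hrρ), fun x hx => hgrad x (collar_mono hrρ hx), M,
    fun x hx => hM x (collar_mono hrρ hx)⟩

theorem GoodCollar.contDiffAt (hΩo : IsOpen Ω) (hr : GoodCollar Ω r) (hy : y ∈ collar Ω r) :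
    ContDiffAt ℝ 2 (bdist Ω) y :=
  hr.2.1.contDiffAt ((isOpen_collar hΩo r).mem_nhds hy)

theorem PosSuperHarmOn.mono {ρ : ℝ} (hh : PosSuperHarmOn Ω μ ρ h) (hrρ : r ≤ ρ) :
    PosSuperHarmOn Ω μ r h := by
  obtain ⟨⟨hC2, hsuper⟩, hpos⟩ := hh
  exact ⟨⟨hC2.mono (collar_mono hrρ), fun x hx => hsuper x (collar_mono hrρ hx)⟩,
    fun x hx => hpos x (collar_mono hrρ hx)⟩

theorem PosSuperHarmOn.contDiffAt (hΩo : IsOpen Ω) (hh : PosSuperHarmOn Ω μ r h)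
    (hy : y ∈ collar Ω r) : ContDiffAt ℝ 2 h y :=
  hh.1.1.contDiffAt ((isOpen_collar hΩo r).mem_nhds hy)

theorem schrodingerOp_hardyPotential_rpow (hδ : ContDiffAt ℝ 2 (bdist Ω) y)
    (hy : 0 < bdist Ω y) (hgrad : ‖gradient (bdist Ω) y‖ = 1) (γ : ℝ) :
    schrodingerOp (hardyPotential Ω μ) (fun z => bdist Ω z ^ γ) y =
      (1 / 4 - μ - (γ - 1 / 2) ^ 2) * bdist Ω y ^ (γ - 2) -
        γ * bdist Ω y ^ (γ - 1) * lap (bdist Ω) y := by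
  have hpow : bdist Ω y ^ γ = bdist Ω y ^ 2 * bdist Ω y ^ (γ - 2) := by
    rw [← rpow_natCast, ← rpow_add hy]
    norm_num
  simp only [schrodingerOp, hardyPotential]
  rw [lap_rpow hδ hy, hgrad, hpow]
  field_simp
  ring

theorem schrodingerOp_hardyPotential_sqrt_nonneg (hδ : ContDiffAt ℝ 2 (bdist Ω) y)
    (hy : 0 < bdist Ω y) (hgrad : ‖gradient (bdist Ω) y‖ = 1)
    (hlap : bdist Ω y * lap (bdist Ω) y ≤ 2 * (1 / 4 - μ)) :
    0 ≤ schrodingerOp (hardyPotential Ω μ) (fun z => bdist Ω z ^ (1 / 2 : ℝ)) y := by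
  have hpow : bdist Ω y ^ (1 / 2 - 1 : ℝ) = bdist Ω y ^ (1 / 2 - 2 : ℝ) * bdist Ω y := by
    rw [← rpow_add_one hy.ne']
    norm_num
  rw [schrodingerOp_hardyPotential_rpow hδ hy hgrad, hpow]
  nlinarith [rpow_pos_of_pos hy (1 / 2 - 2 : ℝ)]

theorem contDiffAt_barrier (hδ : ContDiffAt ℝ 2 (bdist Ω) y) (hy : 0 < bdist Ω y)
    (γ σ α K : ℝ) : ContDiffAt ℝ 2 (barrier Ω γ σ α K) y :=
  ((hδ.rpow_const_of_ne hy.ne').add (contDiffAt_const.mul (hδ.rpow_const_of_ne hy.ne'))).sub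
    (contDiffAt_const.mul (hδ.rpow_const_of_ne hy.ne'))

theorem schrodingerOp_barrier_neg (hδ : ContDiffAt ℝ 2 (bdist Ω) y) (hy : 0 < bdist Ω y)
    (hgrad : ‖gradient (bdist Ω) y‖ = 1) {γ σ α K : ℝ} (hγ : (γ - 1 / 2) ^ 2 = 1 / 4 - μ)
    (hK : 0 ≤ K) (hlap : bdist Ω y * lap (bdist Ω) y ≤ 2 * (1 / 4 - μ))
    (hsmall : |γ| * bdist Ω y ^ (1 - α) * |lap (bdist Ω) y| +
        |σ * (γ + α)| * bdist Ω y * |lap (bdist Ω) y| <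
      σ * ((γ + α - 1 / 2) ^ 2 - (1 / 4 - μ))) :
    schrodingerOp (hardyPotential Ω μ) (barrier Ω γ σ α K) y < 0 := by
  have hpow := fun γ' => hδ.rpow_const_of_ne (p := γ') hy.ne'
  have hexpand : schrodingerOp (hardyPotential Ω μ) (barrier Ω γ σ α K) y =
      schrodingerOp (hardyPotential Ω μ) (fun z => bdist Ω z ^ γ) y +
        σ * schrodingerOp (hardyPotential Ω μ) (fun z => bdist Ω z ^ (γ + α)) y -
        K * schrodingerOp (hardyPotential Ω μ) (fun z => bdist Ω z ^ (1 / 2 : ℝ)) y := by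
    rw [← schrodingerOp_const_mul _ (hpow _), ← schrodingerOp_const_mul _ (hpow _),
      ← schrodingerOp_add (hpow γ) (contDiffAt_const.mul (hpow _)),
      ← schrodingerOp_sub ((hpow γ).add (contDiffAt_const.mul (hpow _)))
        (contDiffAt_const.mul (hpow _))]
    rfl
  have hsqrt := mul_nonneg hK (schrodingerOp_hardyPotential_sqrt_nonneg hδ hy hgrad hlap)
  rw [hexpand, schrodingerOp_hardyPotential_rpow hδ hy hgrad,
    schrodingerOp_hardyPotential_rpow hδ hy hgrad, hγ, sub_self, zero_mul, zero_sub]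
  set t := bdist Ω y
  set D := lap (bdist Ω) y
  have h₁ : t ^ (γ - 1) = t ^ (γ + α - 2) * t ^ (1 - α) := by
    rw [← rpow_add hy]
    ring_nf
  have h₂ : t ^ (γ + α - 1) = t ^ (γ + α - 2) * t := by
    rw [← rpow_add_one hy.ne']
    ring_nf
  have hbracket : -(γ * t ^ (1 - α) * D) - σ * (γ + α) * t * D +
      σ * (1 / 4 - μ - (γ + α - 1 / 2) ^ 2) < 0 := by
    have e₁ : -(γ * D) ≤ |γ| * |D| := abs_mul γ D ▸ neg_le_abs _
    have e₂ : -(σ * (γ + α) * D) ≤ |σ * (γ + α)| * |D| := abs_mul (σ * (γ + α)) D ▸ neg_le_abs _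
    have ht := rpow_nonneg hy.le (1 - α)
    nlinarith [mul_le_mul_of_nonneg_left e₁ ht, mul_le_mul_of_nonneg_left e₂ hy.le]
  rw [h₁, h₂]
  nlinarith [mul_neg_of_pos_of_neg (rpow_pos_of_pos hy (γ + α - 2)) hbracket]

theorem GoodCollar.eventually_schrodingerOp_barrier_neg (hΩo : IsOpen Ω) (hΩc : Ωᶜ.Nonempty)
    (hr : GoodCollar Ω r) (hμ : μ < 1 / 4) {γ σ α : ℝ} (hγ : (γ - 1 / 2) ^ 2 = 1 / 4 - μ)
    (hα : α < 1) (hσ : 0 < σ * ((γ + α - 1 / 2) ^ 2 - (1 / 4 - μ))) :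
    ∀ᶠ τ in 𝓝[>] 0, ∀ K, 0 ≤ K → ∀ y ∈ collar Ω r, bdist Ω y ≤ τ →
      schrodingerOp (hardyPotential Ω μ) (barrier Ω γ σ α K) y < 0 := by
  obtain ⟨M, hM⟩ := hr.2.2.2
  have hcont : Continuous fun τ : ℝ => |γ| * τ ^ (1 - α) * |M| + |σ * (γ + α)| * τ * |M| := by
    have := continuous_rpow_const (q := 1 - α) (by linarith)
    fun_prop
  have hsmall : ∀ᶠ τ in 𝓝 (0 : ℝ), |γ| * τ ^ (1 - α) * |M| + |σ * (γ + α)| * τ * |M| <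
      σ * ((γ + α - 1 / 2) ^ 2 - (1 / 4 - μ)) :=
    hcont.continuousAt.eventually_lt continuousAt_const
      (by simpa [zero_rpow (by linarith : 1 - α ≠ 0)] using hσ)
  have hlap : ∀ᶠ τ in 𝓝 (0 : ℝ), τ * |M| < 2 * (1 / 4 - μ) :=
    (continuous_id.mul continuous_const).continuousAt.eventually_lt continuousAt_const
      (by simp; linarith)
  filter_upwards [nhdsWithin_le_nhds (hsmall.and hlap)] with τ ⟨hsmall, hlap⟩ K hK y hy hyτ
  have hy₀ := bdist_pos hΩo hΩc hy.1
  have hτ : 0 ≤ τ := hy₀.le.trans hyτ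
  have hD : |lap (bdist Ω) y| ≤ |M| := (hM y hy).trans (le_abs_self M)
  refine schrodingerOp_barrier_neg (hr.contDiffAt hΩo hy) hy₀ (hr.2.2.1 y hy) hγ hK ?_
    (lt_of_le_of_lt ?_ hsmall)
  · nlinarith [le_abs_self (lap (bdist Ω) y), abs_nonneg (lap (bdist Ω) y)]
  · have := rpow_le_rpow hy₀.le hyτ (by linarith : 0 ≤ 1 - α)
    have := rpow_nonneg hτ (1 - α)
    have := mul_nonneg (abs_nonneg (σ * (γ + α))) hτ
    gcongr

theorem PosSuperHarmOn.mul_barrier_le (hΩo : IsOpen Ω) (hΩb : Bornology.IsBounded Ω)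
    (hr : GoodCollar Ω r) (hh : PosSuperHarmOn Ω μ r h) {ε τ c γ σ α K : ℝ} (hε : 0 < ε)
    (hτr : τ < r) (hc : 0 < c)
    (hneg : ∀ y ∈ collar Ω r, bdist Ω y ≤ τ →
      schrodingerOp (hardyPotential Ω μ) (barrier Ω γ σ α K) y < 0)
    (hbdry : ∀ y, bdist Ω y = ε ∨ bdist Ω y = τ → c * barrier Ω γ σ α K y ≤ h y)
    (hxε : ε ≤ bdist Ω x) (hxτ : bdist Ω x ≤ τ) : c * barrier Ω γ σ α K x ≤ h x := by
  have hcollar : ∀ y ∈ bdist Ω ⁻¹' Icc ε τ, y ∈ collar Ω r := fun y hy =>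
    ⟨mem_of_bdist_pos (hε.trans_le hy.1), hy.2.trans_lt hτr⟩
  have hbarrier : ∀ y ∈ bdist Ω ⁻¹' Icc ε τ, ContDiffAt ℝ 2 (barrier Ω γ σ α K) y := fun y hy =>
    contDiffAt_barrier (hr.contDiffAt hΩo (hcollar y hy)) (hε.trans_le hy.1) γ σ α K
  refine le_of_schrodingerOp_neg (isCompact_bdist_preimage_Icc hΩb hε)
    (isOpen_Ioo.preimage continuous_bdist) (preimage_mono Ioo_subset_Icc_self)
    (fun y hy => contDiffAt_const.mul (hbarrier y hy))
    (fun y hy => hh.contDiffAt hΩo (hcollar y hy)) (fun y hy => hh.2 y (hcollar y hy))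
    (fun y hy => ?_) (fun y hy => hh.1.2 y (hcollar y (Ioo_subset_Icc_self hy)))
    (fun y hy => ?_) x ⟨hxε, hxτ⟩
  · rw [schrodingerOp_const_mul c (hbarrier y (Ioo_subset_Icc_self hy))]
    exact mul_neg_of_pos_of_neg hc (hneg y (hcollar y (Ioo_subset_Icc_self hy)) hy.2.le)
  · have hy' : bdist Ω y ∈ Icc ε τ \ Ioo ε τ := hy
    rw [Icc_sdiff_Ioo_same (hy.1.1.trans hy.1.2)] at hy'
    exact hbdry y hy'

theorem barrier_eq_zero_of_bdist_eq {ε s : ℝ} (hε : 0 < ε) (hy : bdist Ω y = ε) :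
    barrier Ω (1 / 2 + s) 1 (1 / 2) (ε ^ s + ε ^ (1 / 2 + s)) y = 0 := by
  rw [barrier, hy, rpow_add hε (1 / 2 + s), rpow_add hε (1 / 2) s]
  ring

theorem barrier_le_two_mul_rpow {γ α K : ℝ} (hy : 0 < bdist Ω y) (hy₁ : bdist Ω y ≤ 1)
    (hα : 0 ≤ α) (hK : 0 ≤ K) : barrier Ω γ 1 α K y ≤ 2 * bdist Ω y ^ γ := by
  have := rpow_le_rpow_of_exponent_ge hy hy₁ (le_add_of_nonneg_right hα : γ ≤ γ + α)
  have := mul_nonneg hK (rpow_nonneg hy.le (1 / 2 : ℝ))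
  rw [barrier]
  linarith

theorem PosSuperHarmOn.exists_le_div_rpow (hΩo : IsOpen Ω) (hΩb : Bornology.IsBounded Ω)
    (hΩc : Ωᶜ.Nonempty) (hr : GoodCollar Ω r) (hh : PosSuperHarmOn Ω μ r h) {s : ℝ}
    (hs : 0 < s) (hsμ : s ^ 2 = 1 / 4 - μ) :
    ∃ c, 0 < c ∧ ∃ τ, 0 < τ ∧ τ < r ∧ ∀ x ∈ collar Ω τ, c ≤ h x / bdist Ω x ^ (1 / 2 + s) := by
  set γ := 1 / 2 + s
  have hγ : 0 < γ := by positivity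
  have hneg := hr.eventually_schrodingerOp_barrier_neg (μ := μ) (γ := γ) (σ := 1) (α := 1 / 2)
    hΩo hΩc (by nlinarith) (by rw [← hsμ]; ring) (by norm_num)
    (by rw [← hsμ]; simp only [γ]; ring_nf; linarith)
  obtain ⟨τ, ⟨hneg, hτr, hτ₁⟩, hτ : 0 < τ⟩ := ((hneg.and (nhdsWithin_le_nhds
    ((eventually_lt_nhds hr.1).and (eventually_le_nhds one_pos)))).and self_mem_nhdsWithin).exists
  have hlevel : ∀ y ∈ bdist Ω ⁻¹' Icc τ τ, y ∈ collar Ω r := fun y hy =>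
    ⟨mem_of_bdist_pos (hτ.trans_le hy.1), hy.2.trans_lt hτr⟩
  obtain ⟨m, hm, hmh⟩ := (isCompact_bdist_preimage_Icc hΩb hτ).exists_forall_le'
    (fun y hy => (hh.contDiffAt hΩo (hlevel y hy)).continuousAt.continuousWithinAt)
    (fun y hy => hh.2 y (hlevel y hy))
  have hτγ := rpow_pos_of_pos hτ γ
  set c := m / (2 * τ ^ γ)
  have hc : 0 < c := by positivity
  refine ⟨c, hc, τ, hτ, hτr, fun x hxτ => ?_⟩
  have hx : 0 < bdist Ω x := bdist_pos hΩo hΩc hxτ.1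
  -- compare with the barriers vanishing on `δ = ε`, then let `ε → 0`
  have hcomp : ∀ ε ∈ Ioo 0 (bdist Ω x), c * barrier Ω γ 1 (1 / 2) (ε ^ s + ε ^ γ) x ≤ h x := by
    rintro ε ⟨hε, hεx⟩
    refine hh.mul_barrier_le hΩo hΩb hr hε hτr hc (hneg _ (by positivity)) (fun y hy => ?_)
      hεx.le hxτ.2.le
    rcases hy with hy | hy
    · rw [barrier_eq_zero_of_bdist_eq hε hy, mul_zero]
      exact (hh.2 y ⟨mem_of_bdist_pos (hy ▸ hε), by linarith [hxτ.2]⟩).le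
    · calc c * barrier Ω γ 1 (1 / 2) (ε ^ s + ε ^ γ) y ≤ c * (2 * τ ^ γ) := by
            rw [← hy]
            gcongr
            exact barrier_le_two_mul_rpow (hy ▸ hτ) (hy ▸ hτ₁) (by norm_num) (by positivity)
        _ = m := div_mul_cancel₀ m (by positivity)
        _ ≤ h y := hmh y ⟨hy.ge, hy.le⟩
  have hlim : Tendsto (fun ε => c * barrier Ω γ 1 (1 / 2) (ε ^ s + ε ^ γ) x) (𝓝[>] 0)
      (𝓝 (c * barrier Ω γ 1 (1 / 2) 0 x)) := by
    have hbarrier : Continuous fun K => c * barrier Ω γ 1 (1 / 2) K x := by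
      unfold barrier
      fun_prop
    have hK : Tendsto (fun ε : ℝ => ε ^ s + ε ^ γ) (𝓝 0) (𝓝 (0 ^ s + 0 ^ γ)) :=
      ((continuous_rpow_const hs.le).add (continuous_rpow_const hγ.le)).tendsto 0
    rw [zero_rpow hs.ne', zero_rpow hγ.ne', add_zero] at hK
    exact (hbarrier.tendsto 0).comp (hK.mono_left nhdsWithin_le_nhds)
  have hlimit := le_of_tendsto hlim (eventually_of_mem (Ioo_mem_nhdsGT hx) hcomp)
  rw [barrier, zero_mul, sub_zero, one_mul] at hlimit
  rw [le_div_iff₀ (rpow_pos_of_pos hx γ)]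
  nlinarith [rpow_nonneg hx.le (γ + 1 / 2)]

theorem barrier_neg_one_le_rpow {γ α K : ℝ} (hK : 0 ≤ K) :
    barrier Ω γ (-1) α K y ≤ bdist Ω y ^ γ := by
  have hy : 0 ≤ bdist Ω y := infDist_nonneg
  have := rpow_nonneg hy (γ + α)
  have := mul_nonneg hK (rpow_nonneg hy (1 / 2 : ℝ))
  rw [barrier]
  linarith

theorem barrier_neg_one_nonpos {τ s α : ℝ} (hτ : 0 < τ) (hy : bdist Ω y = τ) :
    barrier Ω (1 / 2 - s) (-1) α (τ ^ (-s)) y ≤ 0 := by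
  have := rpow_nonneg hτ.le (1 / 2 - s + α)
  rw [barrier, hy, ← rpow_add hτ, show -s + 1 / 2 = 1 / 2 - s by ring]
  linarith

theorem half_rpow_le_barrier_neg_one {θ τ s α : ℝ} (hθ : 0 < θ) (hθ₁ : θ < 1) (hτ : 0 < τ)
    (hτ₁ : τ ≤ 1) (hα : 0 ≤ α) (hαs : α ≤ s) (hθα : θ ^ α = 1 / 4) (hy : bdist Ω y = θ * τ) :
    (θ * τ) ^ (1 / 2 - s) / 2 ≤ barrier Ω (1 / 2 - s) (-1) α (τ ^ (-s)) y := by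
  have hθτ := mul_pos hθ hτ
  -- both correction terms are at most a quarter of the leading one
  have h₁ : (θ * τ) ^ α ≤ 1 / 4 := by
    rw [mul_rpow hθ.le hτ.le, ← hθα]
    exact mul_le_of_le_one_right (rpow_nonneg hθ.le α) (rpow_le_one hτ.le hτ₁ hα)
  have h₂ : τ ^ (-s) * (θ * τ) ^ (1 / 2 : ℝ) = (θ * τ) ^ (1 / 2 - s) * θ ^ s := by
    rw [mul_rpow hθ.le hτ.le, mul_rpow hθ.le hτ.le, sub_eq_add_neg, rpow_add hθ, rpow_add hτ,
      rpow_neg hθ.le]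
    field_simp
  have h₃ : θ ^ s ≤ 1 / 4 := hθα ▸ rpow_le_rpow_of_exponent_ge hθ hθ₁.le hαs
  have hlead := rpow_pos_of_pos hθτ (1 / 2 - s)
  rw [barrier, hy, rpow_add hθτ, h₂]
  nlinarith [mul_le_mul_of_nonneg_left h₁ hlead.le, mul_le_mul_of_nonneg_left h₃ hlead.le]

theorem PosSuperHarmOn.exists_div_rpow_le (hΩo : IsOpen Ω) (hΩb : Bornology.IsBounded Ω)
    (hΩne : Ω.Nonempty) (hΩc : Ωᶜ.Nonempty) (hr : GoodCollar Ω r) (hh : PosSuperHarmOn Ω μ r h)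
    {s : ℝ} (hs : 0 < s) (hsμ : s ^ 2 = 1 / 4 - μ) :
    ∃ C, ∀ τ', 0 < τ' → ∃ x ∈ collar Ω τ', h x / bdist Ω x ^ (1 / 2 - s) ≤ C := by
  set γ := 1 / 2 - s
  set α := min (1 / 2) s
  have hα : 0 < α := lt_min one_half_pos hs
  have hαs : α ≤ s := min_le_right _ _
  have hneg := hr.eventually_schrodingerOp_barrier_neg (μ := μ) (γ := γ) (σ := -1) (α := α)
    hΩo hΩc (by nlinarith) (by rw [← hsμ]; ring) (by linarith [min_le_left (1 / 2 : ℝ) s])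
    (by rw [← hsμ]; simp only [γ]; nlinarith)
  obtain ⟨x₀, hx₀⟩ := hΩne
  obtain ⟨τ, ⟨hneg, hτr, hτ₁, hτx₀⟩, hτ : 0 < τ⟩ := ((hneg.and (nhdsWithin_le_nhds
    ((eventually_lt_nhds hr.1).and ((eventually_le_nhds one_pos).and
      (eventually_lt_nhds (bdist_pos hΩo hΩc hx₀)))))).and self_mem_nhdsWithin).exists
  set θ := (1 / 4 : ℝ) ^ α⁻¹
  have hθ : 0 < θ := by positivity
  have hθ₁ : θ < 1 := rpow_lt_one (by norm_num) (by norm_num) (inv_pos.mpr hα)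
  have hθα : θ ^ α = 1 / 4 := rpow_inv_rpow (by norm_num) hα.ne'
  have hθτ : θ * τ < τ := mul_lt_of_lt_one_left hτ hθ₁
  have hθτγ := rpow_pos_of_pos (mul_pos hθ hτ) γ
  obtain ⟨xb, hxb⟩ := exists_bdist_eq hΩc (mul_pos hθ hτ).le (hθτ.trans hτx₀).le
  have hhxb : 0 < h xb := hh.2 xb ⟨mem_of_bdist_pos (hxb ▸ mul_pos hθ hτ), hxb ▸ hθτ.trans hτr⟩
  set C := 4 * h xb / (θ * τ) ^ γ
  have hC : 0 < C := by positivity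
  refine ⟨C, fun τ' hτ' => ?_⟩
  -- otherwise `h ≥ C δ ^ γ` near the boundary, and comparison forces `h xb ≥ 2 h xb`
  by_contra! hbig
  obtain ⟨ε, hε, hεmin⟩ := exists_between (lt_min hτ' (mul_pos hθ hτ))
  obtain ⟨hετ', hεθτ⟩ := lt_min_iff.mp hεmin
  have hcomp := hh.mul_barrier_le hΩo hΩb hr hε hτr hC (hneg _ (rpow_nonneg hτ.le (-s)))
    (fun y hy => ?_) (hxb ▸ hεθτ.le) (hxb ▸ hθτ.le)
  · have hCθτ : C * (θ * τ) ^ γ = 4 * h xb := div_mul_cancel₀ _ hθτγ.ne'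
    have := mul_le_mul_of_nonneg_left
      (half_rpow_le_barrier_neg_one hθ hθ₁ hτ hτ₁ hα.le hαs hθα hxb) hC.le
    linarith
  · rcases hy with hy | hy
    · have hyε := hbig y ⟨mem_of_bdist_pos (hy ▸ hε), hy ▸ hετ'⟩
      rw [lt_div_iff₀ (rpow_pos_of_pos (hy ▸ hε) γ)] at hyε
      exact (mul_le_mul_of_nonneg_left (barrier_neg_one_le_rpow (by positivity)) hC.le).trans
        hyε.le
    · exact (mul_nonpos_of_nonneg_of_nonpos hC.le (barrier_neg_one_nonpos hτ hy)).trans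
        (hh.2 y ⟨mem_of_bdist_pos (hy ▸ hτ), hy ▸ hτr⟩).le

end


/-- Let `μ < 1/4` and let `h` be a positive local super-harmonic of
`L_μ` (on `Ω_ρ`). Then `liminf_{δ(x)→0} h(x)/δ(x)^{β₊} > 0` and
`liminf_{δ(x)→0} h(x)/δ(x)^{β₋} < ∞`. -/
theorem stmt9 {N : ℕ} (hN : 2 ≤ N) (Ω : Set (EuclideanSpace ℝ (Fin N)))
    (hΩo : IsOpen Ω) (hΩne : Ω.Nonempty) (hΩb : Bornology.IsBounded Ω)
    (ρ₀ : ℝ) (hρ₀ : GoodCollar Ω ρ₀) (μ : ℝ) (hμ : μ < 1 / 4)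
    (h : EuclideanSpace ℝ (Fin N) → ℝ) (ρ : ℝ) (hρ : 0 < ρ)
    (hh : PosSuperHarmOn Ω μ ρ h) :
    (∃ c, 0 < c ∧ ∃ τ, 0 < τ ∧ τ ≤ ρ ∧
      ∀ x ∈ collar Ω τ, c ≤ h x / bdist Ω x ^ (1 / 2 + Real.sqrt (1 / 4 - μ))) ∧
    (∃ C : ℝ, ∀ τ, 0 < τ → τ ≤ ρ →
      ∃ x ∈ collar Ω τ, h x / bdist Ω x ^ (1 / 2 - Real.sqrt (1 / 4 - μ)) ≤ C) := by
  have hΩc := compl_nonempty_of_isBounded (by omega) hΩb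
  have hs : 0 < √(1 / 4 - μ) := sqrt_pos.mpr (by linarith)
  have hsμ : √(1 / 4 - μ) ^ 2 = 1 / 4 - μ := sq_sqrt (by linarith)
  have hr := hρ₀.mono (lt_min hρ hρ₀.1) (min_le_right ρ ρ₀)
  have hhr := hh.mono (min_le_left ρ ρ₀)
  obtain ⟨c, hc, τ, hτ, hτr, hlower⟩ := hhr.exists_le_div_rpow hΩo hΩb hΩc hr hs hsμ
  obtain ⟨C, hupper⟩ := hhr.exists_div_rpow_le hΩo hΩb hΩne hΩc hr hs hsμ
  exact ⟨⟨c, hc, τ, hτ, hτr.le.trans (min_le_left ρ ρ₀), hlower⟩, C, fun τ hτ _ => hupper τ hτ⟩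
end
end

section
/- Let μ, s ∈ ℝ, p > 1 and 0 < R < ρ ≤ ρ₀. Let η ∈ C²((0, ρ)) with η > 0, and suppose the radial function x ↦ η(δ(x)) is a super-harmonic of L_μ on Ω_ρ. Let H̄ ∈ ℝ satisfy Δδ(x) ≥ −H̄ for all x ∈ Ω_ρ. Let v ∈ C²((R, ρ)) with v > 0 and v' < 0 on (R, ρ) satisfy the ODE −v''(r) − (2η'(r)/η(r) − H̄)·v'(r) + (η(r)^{p−1}/r^s)·v(r)^p = 0 for all r ∈ (R, ρ). Then z(x) := v(δ(x))·η(δ(x)) is a super-solution of (*) on Ω_{R,ρ}. -/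
/-!
Where `|∇δ| = 1`, the Laplacian of a radial function `g ∘ δ` is `g''(δ) + g'(δ) Δδ`. Expanding
`Δ(v η)` this way and eliminating `v''` with the ODE, `-Δz - μ z/δ² + z^p/δ^s` becomes
`v · L_μ(η ∘ δ) + (-v') η (Δδ + H̄)`: both terms are nonnegative because `η ∘ δ` is a
super-harmonic, `v` is decreasing and `Δδ ≥ -H̄`.
-/

open Set Metric MeasureTheory Real

noncomputable section

open Topology

theorem deriv_deriv_mul {f g : ℝ → ℝ} {r : ℝ} (hf : ContDiffAt ℝ 2 f r)
    (hg : ContDiffAt ℝ 2 g r) :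
    deriv (deriv fun t => f t * g t) r
      = deriv (deriv f) r * g r + 2 * (deriv f r * deriv g r) + f r * deriv (deriv g) r := by
  have hf' : DifferentiableAt ℝ (deriv f) r :=
    (hf.derivWithin (m := 1) le_rfl).differentiableAt one_ne_zero
  have hg' : DifferentiableAt ℝ (deriv g) r :=
    (hg.derivWithin (m := 1) le_rfl).differentiableAt one_ne_zero
  have hfg : deriv (fun t => f t * g t) =ᶠ[𝓝 r] fun t => deriv f t * g t + f t * deriv g t := by
    filter_upwards [hf.eventually (by simp), hg.eventually (by simp)] with t hft hgt
    exact deriv_mul (hft.differentiableAt two_ne_zero) (hgt.differentiableAt two_ne_zero)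
  have hf1 := hf.differentiableAt two_ne_zero
  have hg1 := hg.differentiableAt two_ne_zero
  rw [hfg.deriv_eq, ((hf'.hasDerivAt.fun_mul hg1.hasDerivAt).fun_add
    (hf1.hasDerivAt.fun_mul hg'.hasDerivAt)).deriv]
  ring

theorem fderiv_fderiv_comp_apply {E : Type*} [NormedAddCommGroup E] [NormedSpace ℝ E]
    {d : E → ℝ} {g : ℝ → ℝ} {x : E}
    (hd : ContDiffAt ℝ 2 d x) (hg : ContDiffAt ℝ 2 g (d x)) (w : E) :
    fderiv ℝ (fun y => fderiv ℝ (fun z => g (d z)) y w) x w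
      = deriv (deriv g) (d x) * fderiv ℝ d x w ^ 2
        + deriv g (d x) * fderiv ℝ (fun y => fderiv ℝ d y w) x w := by
  have hchain : (fun y => fderiv ℝ (fun z => g (d z)) y w)
      =ᶠ[𝓝 x] fun y => deriv g (d y) * fderiv ℝ d y w := by
    filter_upwards [hd.eventually (by simp),
      hd.continuousAt.eventually (hg.eventually (by simp))] with y hdy hgy
    have hgd : HasFDerivAt (fun z => g (d z)) (deriv g (d y) • fderiv ℝ d y) y :=
      (hgy.differentiableAt two_ne_zero).hasDerivAt.comp_hasFDerivAt y
        (hdy.differentiableAt two_ne_zero).hasFDerivAt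
    rw [hgd.fderiv, smul_apply, smul_eq_mul]
  have hg' : HasFDerivAt (fun y => deriv g (d y)) (deriv (deriv g) (d x) • fderiv ℝ d x) x :=
    ((hg.derivWithin (m := 1) le_rfl).differentiableAt one_ne_zero).hasDerivAt.comp_hasFDerivAt x
      (hd.differentiableAt two_ne_zero).hasFDerivAt
  have hd' : DifferentiableAt ℝ (fun y => fderiv ℝ d y w) x :=
    ((hd.fderiv_right (m := 1) le_rfl).differentiableAt one_ne_zero).clm_apply
      (differentiableAt_const w)
  rw [hchain.fderiv_eq, fderiv_fun_mul hg'.differentiableAt hd', hg'.fderiv]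
  simp only [add_apply, smul_apply, smul_eq_mul]
  ring

theorem sum_sq_fderiv_single_eq_norm_gradient_sq {N : ℕ} (d : EuclideanSpace ℝ (Fin N) → ℝ)
    (x : EuclideanSpace ℝ (Fin N)) :
    ∑ i : Fin N, fderiv ℝ d x (EuclideanSpace.single i 1) ^ 2 = ‖gradient d x‖ ^ 2 := by
  have hcoord : ∀ i, fderiv ℝ d x (EuclideanSpace.single i 1) = gradient d x i := fun i => by
    rw [← InnerProductSpace.toDual_symm_apply, EuclideanSpace.inner_single_right]
    simp [gradient]
  simp_rw [hcoord, EuclideanSpace.norm_eq]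
  rw [Real.sq_sqrt (by positivity)]
  simp

theorem lap_comp_s13 {N : ℕ} {d : EuclideanSpace ℝ (Fin N) → ℝ} {g : ℝ → ℝ}
    {x : EuclideanSpace ℝ (Fin N)} (hd : ContDiffAt ℝ 2 d x) (hg : ContDiffAt ℝ 2 g (d x)) :
    lap (fun y => g (d y)) x
      = deriv (deriv g) (d x) * ‖gradient d x‖ ^ 2 + deriv g (d x) * lap d x := by
  simp only [lap, fderiv_fderiv_comp_apply hd hg, Finset.sum_add_distrib, ← Finset.mul_sum,
    sum_sq_fderiv_single_eq_norm_gradient_sq]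

theorem isOpen_collar_s13 {N : ℕ} {Ω : Set (EuclideanSpace ℝ (Fin N))} (hΩ : IsOpen Ω) (ρ : ℝ) :
    IsOpen (collar Ω ρ) :=
  hΩ.inter (isOpen_lt (continuous_infDist_pt _) continuous_const)

theorem radial_superSol_inequality {v v' v'' e e' e'' L H m r s p : ℝ} (hv : 0 < v)
    (hv' : v' ≤ 0) (he : 0 < e) (hL : -H ≤ L) (hsuper : 0 ≤ -(e'' + e' * L) - m * e)
    (hode : -v'' - (2 * e' / e - H) * v' + e ^ (p - 1) / r ^ s * v ^ p = 0) :
    0 ≤ -((v'' * e + 2 * (v' * e') + v * e'') + (v' * e + v * e') * L) - m * (v * e)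
      + (v * e) ^ p / r ^ s := by
  have hpow : (v * e) ^ p = e * (e ^ (p - 1) * v ^ p) := by
    rw [mul_rpow hv.le he.le, rpow_sub_one he.ne']
    field_simp
  have hsplit : -((v'' * e + 2 * (v' * e') + v * e'') + (v' * e + v * e') * L) - m * (v * e)
      + (v * e) ^ p / r ^ s = v * (-(e'' + e' * L) - m * e) + -v' * e * (L + H) := by
    have hcancel : 2 * e' / e * v' * e = 2 * e' * v' := by field_simp
    rw [hpow]
    linear_combination e * hode + hcancel
  rw [hsplit]
  have hdrift : 0 ≤ -v' * e * (L + H) :=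
    mul_nonneg (mul_nonneg (neg_nonneg.2 hv') he.le) (by linarith)
  positivity

theorem stmt13_general {N : ℕ} (Ω : Set (EuclideanSpace ℝ (Fin N)))
    (hΩo : IsOpen Ω) (ρ₀ : ℝ) (hρ₀ : GoodCollar Ω ρ₀)
    (μ s p : ℝ) (R ρ : ℝ) (hR : 0 < R) (hρρ₀ : ρ ≤ ρ₀)
    (η : ℝ → ℝ) (hη : ContDiffOn ℝ 2 η (Set.Ioo 0 ρ)) (hηpos : ∀ r ∈ Set.Ioo 0 ρ, 0 < η r)
    (hηsuper : SuperHarm Ω μ (collar Ω ρ) (fun x => η (bdist Ω x)))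
    (Hbar : ℝ) (hH : ∀ x ∈ collar Ω ρ, -Hbar ≤ lap (bdist Ω) x)
    (v : ℝ → ℝ) (hv : ContDiffOn ℝ 2 v (Set.Ioo R ρ))
    (hvpos : ∀ r ∈ Set.Ioo R ρ, 0 < v r) (hvdec : ∀ r ∈ Set.Ioo R ρ, deriv v r < 0)
    (hODE : ∀ r ∈ Set.Ioo R ρ,
      -(deriv (deriv v) r) - (2 * deriv η r / η r - Hbar) * deriv v r
        + (η r ^ (p - 1) / r ^ s) * v r ^ p = 0) :
    SuperSol Ω μ s p (ring' Ω R ρ) (fun x => v (bdist Ω x) * η (bdist Ω x)) := by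
  obtain ⟨-, hδ, hgrad, -⟩ := hρ₀
  have hRρ_sub : Ioo R ρ ⊆ Ioo 0 ρ := Ioo_subset_Ioo_left hR.le
  have hring : ∀ x ∈ ring' Ω R ρ, x ∈ collar Ω ρ₀ ∧ bdist Ω x ∈ Ioo R ρ :=
    fun x ⟨hxΩ, hRx, hxρ⟩ => ⟨⟨hxΩ, hxρ.trans_le hρρ₀⟩, hRx, hxρ⟩
  refine ⟨(hv.mul (hη.mono hRρ_sub)).comp (hδ.mono fun x hx => (hring x hx).1)
      fun x hx => (hring x hx).2, fun x hx => mul_pos (hvpos _ (hring x hx).2)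
      (hηpos _ (hRρ_sub (hring x hx).2)), fun x hx => ?_⟩
  obtain ⟨hx₀, hr⟩ := hring x hx
  have hδx : ContDiffAt ℝ 2 (bdist Ω) x := hδ.contDiffAt ((isOpen_collar_s13 hΩo ρ₀).mem_nhds hx₀)
  have hvr : ContDiffAt ℝ 2 v (bdist Ω x) := hv.contDiffAt (isOpen_Ioo.mem_nhds hr)
  have hηr : ContDiffAt ℝ 2 η (bdist Ω x) :=
    hη.contDiffAt (isOpen_Ioo.mem_nhds (hRρ_sub hr))
  have hxρ : x ∈ collar Ω ρ := ⟨hx.1, hr.2⟩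
  have hsuper := hηsuper.2 x hxρ
  rw [lap_comp_s13 hδx hηr, hgrad x hx₀, one_pow, mul_one] at hsuper
  rw [lap_comp_s13 hδx (hvr.mul hηr), hgrad x hx₀, one_pow, mul_one, deriv_deriv_mul hvr hηr,
    deriv_fun_mul (hvr.differentiableAt two_ne_zero) (hηr.differentiableAt two_ne_zero)]
  exact radial_superSol_inequality (hvpos _ hr) (hvdec _ hr).le (hηpos _ (hRρ_sub hr))
    (hH x hxρ) hsuper (hODE _ hr)

/-- Let `0 < R < ρ ≤ ρ₀`, let `η ∈ C²((0,ρ))` be positive with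
`x ↦ η(δ(x))` a super-harmonic of `L_μ` on `Ω_ρ`, let `H̄` satisfy `Δδ ≥ -H̄` on `Ω_ρ`,
and let `v ∈ C²((R,ρ))` be positive and decreasing, solving the ODE
`-v'' - (2η'/η - H̄)v' + (η^{p-1}/r^s)v^p = 0` on `(R, ρ)`. Then
`z(x) = v(δ(x))·η(δ(x))` is a super-solution of `(*)` on `Ω_{R,ρ}`. -/
theorem stmt13 {N : ℕ} (hN : 2 ≤ N) (Ω : Set (EuclideanSpace ℝ (Fin N)))
    (hΩo : IsOpen Ω) (hΩne : Ω.Nonempty) (hΩb : Bornology.IsBounded Ω)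
    (ρ₀ : ℝ) (hρ₀ : GoodCollar Ω ρ₀)
    (μ s p : ℝ) (hp : 1 < p) (R ρ : ℝ) (hR : 0 < R) (hRρ : R < ρ) (hρρ₀ : ρ ≤ ρ₀)
    (η : ℝ → ℝ) (hη : ContDiffOn ℝ 2 η (Set.Ioo 0 ρ)) (hηpos : ∀ r ∈ Set.Ioo 0 ρ, 0 < η r)
    (hηsuper : SuperHarm Ω μ (collar Ω ρ) (fun x => η (bdist Ω x)))
    (Hbar : ℝ) (hH : ∀ x ∈ collar Ω ρ, -Hbar ≤ lap (bdist Ω) x)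
    (v : ℝ → ℝ) (hv : ContDiffOn ℝ 2 v (Set.Ioo R ρ))
    (hvpos : ∀ r ∈ Set.Ioo R ρ, 0 < v r) (hvdec : ∀ r ∈ Set.Ioo R ρ, deriv v r < 0)
    (hODE : ∀ r ∈ Set.Ioo R ρ,
      -(deriv (deriv v) r) - (2 * deriv η r / η r - Hbar) * deriv v r
        + (η r ^ (p - 1) / r ^ s) * v r ^ p = 0) :
    SuperSol Ω μ s p (ring' Ω R ρ) (fun x => v (bdist Ω x) * η (bdist Ω x)) :=
  stmt13_general Ω hΩo ρ₀ hρ₀ μ s p R ρ hR hρρ₀ η hη hηpos hηsuper Hbar hH v hv hvpos hvdec hODE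
end
end
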